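/- arXiv:1501.05229 — 4 statements merged into one kernel-verified Lean document; each statement's English description precedes it below -/
import Mathlib

section
/- Every linear isometry U of ℝ^N (with N ≥ 3) that maps the polygonal sphere S^{N−1,1}_ℝ onto itself must preserve the set {±e_1,…,±e_N} of signed standard basis vectors, and hence U is a signed permutation matrix (an element of the hyperoctahedral group H_N). -/
/-! If `U` maps the polygonal sphere onto itself then, since having at most two nonzero
coordinates is invariant under scaling, `U⁻¹` preserves that property. Apply this to the
orthonormal basis `vₐ = U⁻¹ eₐ` and to the sums `vₐ + v_b`. If `vₐ` had two nonzero coordinates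
`i, j`, every `v_b` with `b ≠ a` would be forced into the coordinate plane of `i, j`; as `N ≥ 3`,
two such `v_b, v_c` together with `vₐ` would be three nonzero orthogonal vectors in a plane.
So every `vₐ` is `±e_{π a}`, and then `(U x)ᵢ = ⟪vᵢ, x⟫ = ±x_{π i}`. -/

open scoped RealInnerProductSpace

variable {ι : Type*}

def AtMostTwoNonzero (x : ι → ℝ) : Prop :=
  ∀ i j k, i ≠ j → j ≠ k → i ≠ k → x i * x j * x k = 0

def AtMostOneNonzero (x : ι → ℝ) : Prop :=
  ∀ i j, i ≠ j → x i * x j = 0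

lemma AtMostTwoNonzero.eq_zero {x : ι → ℝ} (hx : AtMostTwoNonzero x) {i j k : ι}
    (hij : i ≠ j) (hi : x i ≠ 0) (hj : x j ≠ 0) (hki : k ≠ i) (hkj : k ≠ j) : x k = 0 :=
  (mul_eq_zero.1 (hx i j k hij hkj.symm hki.symm)).resolve_left (mul_ne_zero hi hj)

lemma atMostTwoNonzero_of_eq_zero_off {x : ι → ℝ} {a b : ι}
    (h : ∀ k, k ≠ a → k ≠ b → x k = 0) : AtMostTwoNonzero x := by
  intro i j k hij hjk hik
  by_cases hi : i ≠ a ∧ i ≠ b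
  · simp [h i hi.1 hi.2]
  by_cases hj : j ≠ a ∧ j ≠ b
  · simp [h j hj.1 hj.2]
  rw [h k (by grind) (by grind), mul_zero]

lemma atMostTwoNonzero_smul_iff {x : ι → ℝ} {c : ℝ} (hc : c ≠ 0) :
    AtMostTwoNonzero (c • x) ↔ AtMostTwoNonzero x := by
  have h (a b d : ℝ) : c * a * (c * b) * (c * d) = c ^ 3 * (a * b * d) := by ring
  simp [AtMostTwoNonzero, h, hc]

lemma eq_zero_or_eq_zero_of_orthogonal_in_plane {a b c d e f : ℝ} (ha : a ≠ 0) (hb : b ≠ 0)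
    (h₁ : a * c + b * d = 0) (h₂ : a * e + b * f = 0) (h₃ : c * e + d * f = 0) :
    (c = 0 ∧ d = 0) ∨ (e = 0 ∧ f = 0) := by
  have hdf : d * f * (a ^ 2 + b ^ 2) = 0 := by
    linear_combination a ^ 2 * h₃ - a * e * h₁ + b * d * h₂
  have hab : a ^ 2 + b ^ 2 ≠ 0 := by positivity
  rcases mul_eq_zero.1 ((mul_eq_zero.1 hdf).resolve_right hab) with hd | hf
  · subst hd
    exact .inl ⟨by simpa [ha] using h₁, rfl⟩
  · subst hf
    exact .inr ⟨by simpa [ha] using h₂, rfl⟩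

/-- The polygonal sphere `S^{N-1,1}_ℝ`. -/
def polygonalSphere (ι : Type*) [Fintype ι] : Set (EuclideanSpace ℝ ι) :=
  {x | ∑ i, x i ^ 2 = 1 ∧ AtMostTwoNonzero x}

def signedBasisVectors (ι : Type*) [Fintype ι] : Set (EuclideanSpace ℝ ι) :=
  {x | ∑ i, x i ^ 2 = 1 ∧ AtMostOneNonzero x}

variable [Fintype ι]

lemma EuclideanSpace.sum_sq_eq_norm_sq (x : EuclideanSpace ℝ ι) :
    ∑ i, x i ^ 2 = ‖x‖ ^ 2 := by
  simp [EuclideanSpace.norm_sq_eq]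

lemma EuclideanSpace.real_inner_eq_sum (x y : EuclideanSpace ℝ ι) :
    ⟪x, y⟫ = ∑ i, x i * y i := by
  simp [PiLp.inner_apply, mul_comm]

lemma EuclideanSpace.real_inner_eq_of_eq_zero_off {x : EuclideanSpace ℝ ι} {i j : ι}
    (hij : i ≠ j) (hx : ∀ k, k ≠ i → k ≠ j → x k = 0) (y : EuclideanSpace ℝ ι) :
    ⟪x, y⟫ = x i * y i + x j * y j := by
  rw [real_inner_eq_sum, Fintype.sum_eq_add i j hij fun k hk => by simp [hx k hk.1 hk.2]]

lemma AtMostTwoNonzero.map_of_mapsTo {U : EuclideanSpace ℝ ι →ₗ[ℝ] EuclideanSpace ℝ ι}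
    (hU : Set.MapsTo U (polygonalSphere ι) (polygonalSphere ι)) {x : EuclideanSpace ℝ ι}
    (hx : AtMostTwoNonzero x) : AtMostTwoNonzero (U x) := by
  rcases eq_or_ne x 0 with rfl | hx0
  · simp [AtMostTwoNonzero]
  have hc : ‖x‖⁻¹ ≠ 0 := inv_ne_zero (norm_ne_zero_iff.2 hx0)
  have hmem : ‖x‖⁻¹ • x ∈ polygonalSphere ι := by
    refine ⟨?_, ?_⟩
    · rw [EuclideanSpace.sum_sq_eq_norm_sq, norm_smul, norm_inv, norm_norm,
        inv_mul_cancel₀ (norm_ne_zero_iff.2 hx0), one_pow]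
    · rwa [WithLp.ofLp_smul, atMostTwoNonzero_smul_iff hc]
  have := (hU hmem).2
  rwa [map_smul, WithLp.ofLp_smul, atMostTwoNonzero_smul_iff hc] at this

lemma AtMostTwoNonzero.eq_zero_off_of_inner_eq_zero {x y : EuclideanSpace ℝ ι} {i j : ι}
    (hij : i ≠ j) (hx : AtMostTwoNonzero x) (hxi : x i ≠ 0) (hxj : x j ≠ 0)
    (hy : AtMostTwoNonzero y) (hxy : AtMostTwoNonzero (x + y)) (hinner : ⟪x, y⟫ = 0)
    {k : ι} (hki : k ≠ i) (hkj : k ≠ j) : y k = 0 := by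
  have hx_off := fun l => hx.eq_zero hij hxi hxj (k := l)
  rw [EuclideanSpace.real_inner_eq_of_eq_zero_off hij hx_off] at hinner
  by_contra hyk
  -- `(x + y) k = y k ≠ 0`, so `y = -x` at `i` or at `j`, making `⟪x, y⟫ = -x_i²` or `-x_j²`
  have hy_ij : y i = 0 ∨ y j = 0 := by simpa [hyk] using hy i j k hij hkj.symm hki.symm
  have hxy_ij : x i + y i = 0 ∨ x j + y j = 0 := by
    simpa [hx_off k hki hkj, hyk] using hxy i j k hij hkj.symm hki.symm
  rcases hy_ij with hy0 | hy0 <;> rcases hxy_ij with hs | hs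
  · exact hxi (by linarith)
  · rw [hy0, eq_neg_of_add_eq_zero_right hs] at hinner
    exact hxj (by simpa using hinner)
  · rw [hy0, eq_neg_of_add_eq_zero_right hs] at hinner
    exact hxi (by simpa using hinner)
  · exact hxj (by linarith)

lemma AtMostTwoNonzero.atMostOneNonzero_of_orthogonal {x y z : EuclideanSpace ℝ ι}
    (hx : AtMostTwoNonzero x) (hy : AtMostTwoNonzero y) (hz : AtMostTwoNonzero z)
    (hxy : AtMostTwoNonzero (x + y)) (hxz : AtMostTwoNonzero (x + z))
    (hxy₀ : ⟪x, y⟫ = 0) (hxz₀ : ⟪x, z⟫ = 0) (hyz₀ : ⟪y, z⟫ = 0) (hy₀ : y ≠ 0) (hz₀ : z ≠ 0) :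
    AtMostOneNonzero x := by
  intro i j hij
  by_contra hxij
  obtain ⟨hxi, hxj⟩ := mul_ne_zero_iff.1 hxij
  have hx_off := fun k => hx.eq_zero hij hxi hxj (k := k)
  have hy_off := fun k => hx.eq_zero_off_of_inner_eq_zero hij hxi hxj hy hxy hxy₀ (k := k)
  have hz_off := fun k => hx.eq_zero_off_of_inner_eq_zero hij hxi hxj hz hxz hxz₀ (k := k)
  have eq_zero : ∀ w : EuclideanSpace ℝ ι, (∀ k, k ≠ i → k ≠ j → w k = 0) →
      w i = 0 ∧ w j = 0 → w = 0 := by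
    rintro w hw ⟨hwi, hwj⟩
    ext k
    by_cases hki : k = i
    · simp [hki, hwi]
    by_cases hkj : k = j
    · simp [hkj, hwj]
    simp [hw k hki hkj]
  rw [EuclideanSpace.real_inner_eq_of_eq_zero_off hij hx_off] at hxy₀ hxz₀
  rw [EuclideanSpace.real_inner_eq_of_eq_zero_off hij hy_off] at hyz₀
  rcases eq_zero_or_eq_zero_of_orthogonal_in_plane hxi hxj hxy₀ hxz₀ hyz₀ with h | h
  · exact hy₀ (eq_zero y hy_off h)
  · exact hz₀ (eq_zero z hz_off h)

lemma atMostOneNonzero_apply_single_of_mapsTo [DecidableEq ι] (hι : 3 ≤ Fintype.card ι)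
    {V : EuclideanSpace ℝ ι ≃ₗᵢ[ℝ] EuclideanSpace ℝ ι}
    (hV : Set.MapsTo V (polygonalSphere ι) (polygonalSphere ι)) (a : ι) :
    AtMostOneNonzero (V (EuclideanSpace.single a 1)) := by
  obtain ⟨b, c, hba, hca, hbc⟩ : ∃ b c, b ≠ a ∧ c ≠ a ∧ b ≠ c := by
    have : 1 < (Finset.univ.erase a).card := by
      rw [Finset.card_erase_of_mem (Finset.mem_univ a), Finset.card_univ]; omega
    obtain ⟨b, hb, c, hc, hbc⟩ := Finset.one_lt_card.1 this
    exact ⟨b, c, Finset.ne_of_mem_erase hb, Finset.ne_of_mem_erase hc, hbc⟩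
  set e := fun i => V (EuclideanSpace.single i (1 : ℝ)) with he
  have he_on : Orthonormal ℝ e := by
    simpa [Function.comp_def] using
      (EuclideanSpace.basisFun ι ℝ).orthonormal.comp_linearIsometryEquiv V
  have hmap {w : EuclideanSpace ℝ ι} : AtMostTwoNonzero w → AtMostTwoNonzero (V w) :=
    AtMostTwoNonzero.map_of_mapsTo (U := V.toLinearMap) hV
  have hsum : ∀ i j, AtMostTwoNonzero (e i + e j) := fun i j => by
    rw [he, ← map_add]
    exact hmap (atMostTwoNonzero_of_eq_zero_off (a := i) (b := j) fun k hki hkj => by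
      simp [hki, hkj])
  have hsingle : ∀ i, AtMostTwoNonzero (e i) := fun i =>
    hmap (atMostTwoNonzero_of_eq_zero_off (a := i) (b := i) fun k hki _ => by simp [hki])
  exact (hsingle a).atMostOneNonzero_of_orthogonal (hsingle b) (hsingle c) (hsum a b) (hsum a c)
    (he_on.2 hba.symm) (he_on.2 hca.symm) (he_on.2 hbc) (he_on.ne_zero b) (he_on.ne_zero c)

lemma exists_eq_single_of_atMostOneNonzero [DecidableEq ι] {x : EuclideanSpace ℝ ι}
    (hx₁ : ∑ i, x i ^ 2 = 1) (hx : AtMostOneNonzero x) :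
    ∃ m ε, (ε = 1 ∨ ε = -1) ∧ x = EuclideanSpace.single m ε := by
  obtain ⟨m, hm⟩ : ∃ m, x m ≠ 0 := by
    by_contra! h
    simp [h] at hx₁
  have hoff : ∀ k, k ≠ m → x k = 0 := fun k hk =>
    (mul_eq_zero.1 (hx m k hk.symm)).resolve_left hm
  refine ⟨m, x m, ?_, ?_⟩
  · rwa [Fintype.sum_eq_single m fun k hk => by simp [hoff k hk], sq_eq_one_iff] at hx₁
  · ext k
    by_cases hk : k = m
    · simp [hk]
    · simp [hk, hoff k hk]

lemma exists_signed_perm_of_atMostOneNonzero_symm_single [DecidableEq ι]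
    {U : EuclideanSpace ℝ ι ≃ₗᵢ[ℝ] EuclideanSpace ℝ ι}
    (hU : ∀ i, AtMostOneNonzero (U.symm (EuclideanSpace.single i 1))) :
    ∃ (π : Equiv.Perm ι) (ε : ι → ℝ), (∀ i, ε i = 1 ∨ ε i = -1) ∧
      ∀ (x : EuclideanSpace ℝ ι) (i : ι), U x i = ε i * x (π i) := by
  have hunit : ∀ i, ∑ k, U.symm (EuclideanSpace.single i 1) k ^ 2 = 1 := fun i => by
    simp [EuclideanSpace.sum_sq_eq_norm_sq]
  choose π ε hε hπ using fun i => exists_eq_single_of_atMostOneNonzero (hunit i) (hU i)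
  have hformula : ∀ x i, U x i = ε i * x (π i) := fun x i => by
    calc U x i = ⟪EuclideanSpace.single i 1, U x⟫ := by
          simp [EuclideanSpace.inner_single_left]
      _ = ⟪U.symm (EuclideanSpace.single i 1), x⟫ := by
        rw [U.symm.inner_map_eq_flip, U.symm_symm]
      _ = ε i * x (π i) := by simp [hπ i, EuclideanSpace.inner_single_left]
  have hε₀ : ∀ i, ε i ≠ 0 := fun i => by rcases hε i with h | h <;> simp [h]
  have hinj : Function.Injective π := by
    intro i j hij
    by_contra hne
    have := U.symm.inner_map_map (EuclideanSpace.single i 1) (EuclideanSpace.single j 1)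
    rw [hπ i, hπ j, hij] at this
    simp [EuclideanSpace.inner_single_left, hne, hε₀] at this
  exact ⟨Equiv.ofBijective π (Finite.injective_iff_bijective.1 hinj), ε, hε, hformula⟩

lemma mapsTo_signedBasisVectors_of_signed_perm
    {U : EuclideanSpace ℝ ι ≃ₗᵢ[ℝ] EuclideanSpace ℝ ι} {π : Equiv.Perm ι} {ε : ι → ℝ}
    (hU : ∀ (x : EuclideanSpace ℝ ι) (i : ι), U x i = ε i * x (π i)) :
    Set.MapsTo U (signedBasisVectors ι) (signedBasisVectors ι) := by
  rintro x ⟨hx₁, hx⟩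
  refine ⟨?_, ?_⟩
  · rwa [EuclideanSpace.sum_sq_eq_norm_sq, U.norm_map, ← EuclideanSpace.sum_sq_eq_norm_sq]
  intro a b hab
  rw [hU, hU, mul_mul_mul_comm, hx _ _ (π.injective.ne hab), mul_zero]

lemma exists_signed_perm_of_mapsTo_symm (hι : 3 ≤ Fintype.card ι)
    {U : EuclideanSpace ℝ ι ≃ₗᵢ[ℝ] EuclideanSpace ℝ ι}
    (hU : Set.MapsTo U.symm (polygonalSphere ι) (polygonalSphere ι)) :
    ∃ (π : Equiv.Perm ι) (ε : ι → ℝ), (∀ i, ε i = 1 ∨ ε i = -1) ∧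
      ∀ (x : EuclideanSpace ℝ ι) (i : ι), U x i = ε i * x (π i) := by
  classical
  exact exists_signed_perm_of_atMostOneNonzero_symm_single
    (atMostOneNonzero_apply_single_of_mapsTo hι hU)

/-- Any linear isometry of `ℝ^N` (`N ≥ 3`) mapping the polygonal sphere
`S^{N-1,1}_ℝ` (unit vectors with at most 2 nonzero coordinates) onto itself
preserves the set `{±e₁,…,±e_N}` of signed basis vectors, and is a signed
permutation matrix, i.e. an element of the hyperoctahedral group `H_N`. -/
theorem isometry_of_polygonal_sphere_is_signed_permutation (N : ℕ) (hN : 3 ≤ N)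
    (U : EuclideanSpace ℝ (Fin N) ≃ₗᵢ[ℝ] EuclideanSpace ℝ (Fin N))
    (hU : ⇑U '' {x : EuclideanSpace ℝ (Fin N) | (∑ i, x i ^ 2) = 1 ∧
        ∀ i j k : Fin N, i ≠ j → j ≠ k → i ≠ k → x i * x j * x k = 0} =
      {x : EuclideanSpace ℝ (Fin N) | (∑ i, x i ^ 2) = 1 ∧
        ∀ i j k : Fin N, i ≠ j → j ≠ k → i ≠ k → x i * x j * x k = 0}) :
    (⇑U '' {x : EuclideanSpace ℝ (Fin N) | (∑ i, x i ^ 2) = 1 ∧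
        ∀ i j : Fin N, i ≠ j → x i * x j = 0} =
      {x : EuclideanSpace ℝ (Fin N) | (∑ i, x i ^ 2) = 1 ∧
        ∀ i j : Fin N, i ≠ j → x i * x j = 0}) ∧
    ∃ (π : Equiv.Perm (Fin N)) (ε : Fin N → ℝ),
      (∀ i, ε i = 1 ∨ ε i = -1) ∧
      ∀ (x : EuclideanSpace ℝ (Fin N)) (i : Fin N), U x i = ε i * x (π i) := by
  have hN' : 3 ≤ Fintype.card (Fin N) := by rwa [Fintype.card_fin]
  have hS : U '' polygonalSphere (Fin N) = polygonalSphere (Fin N) := hU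
  have hS_maps : Set.MapsTo U (polygonalSphere (Fin N)) (polygonalSphere (Fin N)) :=
    (Set.image_eq_iff_surjOn_mapsTo.1 hS).2
  have hS_maps_symm : Set.MapsTo U.symm (polygonalSphere (Fin N)) (polygonalSphere (Fin N)) := by
    rintro _ hx
    obtain ⟨y, hy, rfl⟩ := hS.symm ▸ hx
    simpa using hy
  obtain ⟨π, ε, hε, hUπ⟩ := exists_signed_perm_of_mapsTo_symm hN' hS_maps_symm
  obtain ⟨π', ε', -, hUπ'⟩ := exists_signed_perm_of_mapsTo_symm (U := U.symm) hN' hS_maps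
  have hB : U '' signedBasisVectors (Fin N) = signedBasisVectors (Fin N) :=
    Set.image_eq_iff_surjOn_mapsTo.2
      ⟨Set.RightInvOn.surjOn (fun x _ => U.apply_symm_apply x)
        (mapsTo_signedBasisVectors_of_signed_perm hUπ'),
       mapsTo_signedBasisVectors_of_signed_perm hUπ⟩
  exact ⟨hB, π, ε, hε, hUπ⟩
end

section
/- For d ∈ {2,…,N−1}, the group of linear isometries of ℝ^N preserving the polygonal sphere S^{N−1,d−1}_ℝ is exactly the hyperoctahedral group H_N of signed permutation matrices. -/
/-!
A linear isometry `U` preserving the polygonal sphere preserves the cone of vectors with at most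
`d` nonzero coordinates. Evaluating `U` at a generic vector of a coordinate subspace `ℝ^I`,
`#I ≤ d`, shows that the images `U eᵢ`, `i ∈ I`, have at most `d` nonzero coordinates altogether.
As `d < N` and every coordinate is nonzero on some `U eᵢ`, a greedy enlargement of `I` then forces
each `U eᵢ` to have a single nonzero coordinate; being a unit vector, it is `±e_{p i}`, and
injectivity of `U` makes `p` a permutation.
-/

open Finset

namespace PolygonalSphere

variable {ι : Type*} [Fintype ι]

noncomputable def supp (x : EuclideanSpace ℝ ι) : Finset ι := {i | x i ≠ 0}

@[simp] lemma mem_supp {x : EuclideanSpace ℝ ι} {i : ι} : i ∈ supp x ↔ x i ≠ 0 := by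
  simp [supp]

lemma supp_smul {c : ℝ} (hc : c ≠ 0) (x : EuclideanSpace ℝ ι) : supp (c • x) = supp x := by
  ext i
  simp [hc]

lemma supp_nonempty_iff {x : EuclideanSpace ℝ ι} : (supp x).Nonempty ↔ x ≠ 0 := by
  simp only [Finset.Nonempty, mem_supp, ne_eq]
  exact ⟨fun ⟨i, hi⟩ hx => hi (by simp [hx]), fun hx => by
    by_contra! h
    exact hx (by ext i; exact h i)⟩

lemma forall_prod_eq_zero_iff_card_supp_le (x : EuclideanSpace ℝ ι) (d : ℕ) :
    (∀ f : Fin (d + 1) → ι, Function.Injective f → ∏ r, x (f r) = 0) ↔ #(supp x) ≤ d := by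
  constructor
  · intro h
    by_contra! hd
    obtain ⟨f, hf⟩ :=
      Function.Embedding.exists_of_card_le_finset (α := Fin (d + 1)) (by simpa using hd)
    obtain ⟨r, -, hr⟩ := prod_eq_zero_iff.1 (h f f.injective)
    exact mem_supp.1 (hf ⟨r, rfl⟩) hr
  · intro hd f hf
    by_contra hx
    have hmaps : Set.MapsTo f (univ : Finset (Fin (d + 1))) (supp x) :=
      fun r _ => mem_supp.2 (prod_ne_zero_iff.1 hx r (mem_univ r))
    have := card_le_card_of_injOn f hmaps hf.injOn
    simp only [card_univ, Fintype.card_fin] at this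
    omega

def polygonalSphere (ι : Type*) [Fintype ι] (d : ℕ) : Set (EuclideanSpace ℝ ι) :=
  {x | ‖x‖ = 1 ∧ #(supp x) ≤ d}

lemma setOf_eq_polygonalSphere (d : ℕ) :
    {x : EuclideanSpace ℝ ι | (∑ i, x i ^ 2) = 1 ∧
      ∀ f : Fin (d + 1) → ι, Function.Injective f → (∏ r, x (f r)) = 0} =
      polygonalSphere ι d := by
  ext x
  simp only [polygonalSphere, Set.mem_ofPred_eq, forall_prod_eq_zero_iff_card_supp_le,
    ← EuclideanSpace.real_norm_sq_eq, pow_eq_one_iff_of_nonneg (norm_nonneg x) two_ne_zero]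

lemma card_supp_map_le_of_mapsTo {d : ℕ}
    (U : EuclideanSpace ℝ ι →ₗ[ℝ] EuclideanSpace ℝ ι)
    (hU : Set.MapsTo U (polygonalSphere ι d) (polygonalSphere ι d))
    (x : EuclideanSpace ℝ ι) (hx : #(supp x) ≤ d) : #(supp (U x)) ≤ d := by
  rcases eq_or_ne x 0 with rfl | h0
  · simp [supp]
  have hx0 : ‖x‖ ≠ 0 := norm_ne_zero_iff.2 h0
  have hn : ‖x‖⁻¹ ≠ 0 := inv_ne_zero hx0
  have hunit : ‖x‖⁻¹ • x ∈ polygonalSphere ι d :=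
    ⟨by rw [norm_smul, norm_inv, norm_norm, inv_mul_cancel₀ hx0],
      by rwa [supp_smul hn]⟩
  simpa only [map_smul, supp_smul hn] using (hU hunit).2

section Combinatorics

variable {α β : Type*} [DecidableEq α] [Fintype β] [DecidableEq β] {g : α → Finset β}

lemma exists_card_biUnion_lt_card_biUnion_insert (hcover : ∀ b, ∃ a, b ∈ g a) (I : Finset α)
    (hI : #(I.biUnion g) < Fintype.card β) :
    ∃ a ∉ I, #(I.biUnion g) < #((insert a I).biUnion g) := by
  obtain ⟨b, -, hb⟩ := exists_mem_notMem_of_card_lt_card (t := univ) (by simpa using hI)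
  obtain ⟨a, hab⟩ := hcover b
  have haI : a ∉ I := fun ha => hb (mem_biUnion.2 ⟨a, ha, hab⟩)
  refine ⟨a, haI, ?_⟩
  calc #(I.biUnion g) < #(insert b (I.biUnion g)) := by rw [card_insert_of_notMem hb]; omega
    _ ≤ #((insert a I).biUnion g) := by
      rw [biUnion_insert]
      exact card_le_card (insert_subset (mem_union_left _ hab) subset_union_right)

/-- Starting from `{a}`, adding one index at a time keeps `#I < #(I.biUnion g)` up to `#I = d`. -/
lemma card_le_one_of_card_biUnion_le {d : ℕ} (hd : 1 ≤ d) (hdβ : d < Fintype.card β)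
    (hg : ∀ I : Finset α, #I ≤ d → #(I.biUnion g) ≤ d) (hcover : ∀ b, ∃ a, b ∈ g a) (a : α) :
    #(g a) ≤ 1 := by
  by_contra! ha
  have grow : ∀ k, 1 ≤ k → k ≤ d → ∃ I : Finset α, #I = k ∧ k < #(I.biUnion g) := by
    intro k hk
    induction k, hk using Nat.le_induction with
    | base => exact fun _ => ⟨{a}, by simpa using ha⟩
    | succ k hk ih =>
      intro hkd
      obtain ⟨I, hIk, hIg⟩ := ih (by omega)
      obtain ⟨a', ha'I, hlt⟩ := exists_card_biUnion_lt_card_biUnion_insert hcover I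
        ((hg I (by omega)).trans_lt hdβ)
      exact ⟨insert a' I, by rw [card_insert_of_notMem ha'I, hIk], by omega⟩
  obtain ⟨I, hId, hIg⟩ := grow d hd le_rfl
  exact (hg I hId.le).not_gt hIg

end Combinatorics

lemma card_supp_eq_of_signedPerm {π : Equiv.Perm ι} {ε : ι → ℝ} (hε : ∀ i, ε i ≠ 0)
    {x y : EuclideanSpace ℝ ι} (hxy : ∀ i, y i = ε i * x (π i)) : #(supp y) = #(supp x) := by
  have : supp y = (supp x).map π.symm.toEmbedding := by
    ext i
    simp [hxy, hε]
  rw [this, card_map]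

lemma image_polygonalSphere_of_signedPerm {d : ℕ}
    (U : EuclideanSpace ℝ ι ≃ₗᵢ[ℝ] EuclideanSpace ℝ ι) {π : Equiv.Perm ι} {ε : ι → ℝ}
    (hε : ∀ i, ε i = 1 ∨ ε i = -1) (hU : ∀ x i, U x i = ε i * x (π i)) :
    U '' polygonalSphere ι d = polygonalSphere ι d := by
  have hε0 (i : ι) : ε i ≠ 0 := by rcases hε i with h | h <;> simp [h]
  ext y
  have hy := card_supp_eq_of_signedPerm hε0 (hU (U.symm y))
  rw [U.apply_symm_apply] at hy
  rw [U.image_eq_preimage_symm, Set.mem_preimage, polygonalSphere, Set.mem_ofPred_eq,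
    Set.mem_ofPred_eq, U.symm.norm_map, hy]

variable [DecidableEq ι]

lemma eq_single_of_supp_eq_singleton {x : EuclideanSpace ℝ ι} {j : ι} (h : supp x = {j}) :
    x = EuclideanSpace.single j (x j) := by
  ext a
  by_cases ha : a = j
  · subst ha
    simp
  · have : a ∉ supp x := by simp [h, ha]
    simpa [ha] using this

lemma apply_eq_inner_symm_single (U : EuclideanSpace ℝ ι ≃ₗᵢ[ℝ] EuclideanSpace ℝ ι)
    (x : EuclideanSpace ℝ ι) (a : ι) :
    U x a = inner ℝ (U.symm (EuclideanSpace.single a 1)) x := by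
  rw [real_inner_comm, ← U.inner_map_eq_flip,
    EuclideanSpace.inner_single_right, one_mul, conj_trivial]

/-- For each coordinate `a` of the union, the `x ∈ ℝ^I` with `U x a = 0` form a proper subspace,
and finitely many proper subspaces cannot cover `ℝ^I`. -/
lemma exists_supp_subset_biUnion_subset_supp (U : EuclideanSpace ℝ ι →ₗ[ℝ] EuclideanSpace ℝ ι)
    (I : Finset ι) :
    ∃ x, supp x ⊆ I ∧
      I.biUnion (fun i => supp (U (EuclideanSpace.single i 1))) ⊆ supp (U x) := by
  let A := I.biUnion (fun i => supp (U (EuclideanSpace.single i 1)))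
  let V : Submodule ℝ (EuclideanSpace ℝ ι) :=
    ⨅ j ∉ I, LinearMap.ker (EuclideanSpace.proj (𝕜 := ℝ) j).toLinearMap
  obtain ⟨x, hxV, hx⟩ := Module.Dual.exists_forall_mem_ne_zero_of_forall_exists (ι := A) V
    (fun a => (EuclideanSpace.proj (𝕜 := ℝ) a.1).toLinearMap ∘ₗ U) (by
      rintro ⟨a, ha⟩
      obtain ⟨i, hi, hai⟩ := mem_biUnion.1 ha
      refine ⟨EuclideanSpace.single i 1, ?_, by simpa using hai⟩
      simp only [V, Submodule.mem_iInf, LinearMap.mem_ker]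
      intro j hj
      simp [ne_of_mem_of_not_mem hi hj |>.symm])
  refine ⟨x, fun j hj => ?_, fun a ha => by simpa using hx ⟨a, ha⟩⟩
  by_contra hjI
  simp only [V, Submodule.mem_iInf, LinearMap.mem_ker] at hxV
  exact mem_supp.1 hj (by simpa using hxV j hjI)

lemma exists_map_single_eq_single {d : ℕ} (hd : 1 ≤ d) (hdι : d < Fintype.card ι)
    (U : EuclideanSpace ℝ ι ≃ₗᵢ[ℝ] EuclideanSpace ℝ ι)
    (hU : ∀ x, #(supp x) ≤ d → #(supp (U x)) ≤ d) (i : ι) :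
    ∃ j c, U (EuclideanSpace.single i 1) = EuclideanSpace.single j c := by
  have hbiUnion (I : Finset ι) (hI : #I ≤ d) :
      #(I.biUnion fun i => supp (U (EuclideanSpace.single i 1))) ≤ d := by
    obtain ⟨x, hxI, hUx⟩ := exists_supp_subset_biUnion_subset_supp U.toLinearMap I
    exact (card_le_card hUx).trans (hU x ((card_le_card hxI).trans hI))
  have hcover (a : ι) : ∃ j, a ∈ supp (U (EuclideanSpace.single j 1)) := by
    obtain ⟨j, hj⟩ := supp_nonempty_iff.2 (by simp : U.symm (EuclideanSpace.single a 1) ≠ 0)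
    refine ⟨j, ?_⟩
    rwa [mem_supp, apply_eq_inner_symm_single, EuclideanSpace.inner_single_right, one_mul,
      conj_trivial, ← mem_supp]
  have hne : (supp (U (EuclideanSpace.single i 1))).Nonempty := supp_nonempty_iff.2 (by simp)
  obtain ⟨j, hj⟩ := card_eq_one.1 <| le_antisymm
    (card_le_one_of_card_biUnion_le hd hdι hbiUnion hcover i) (card_pos.2 hne)
  exact ⟨j, _, eq_single_of_supp_eq_singleton hj⟩

lemma exists_signedPerm_of_map_single_eq_single
    (U : EuclideanSpace ℝ ι ≃ₗᵢ[ℝ] EuclideanSpace ℝ ι)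
    (hU : ∀ i, ∃ j c, U (EuclideanSpace.single i 1) = EuclideanSpace.single j c) :
    ∃ (π : Equiv.Perm ι) (ε : ι → ℝ), (∀ i, ε i = 1 ∨ ε i = -1) ∧
      ∀ x i, U x i = ε i * x (π i) := by
  choose p c hpc using hU
  have hc (i : ι) : c i = 1 ∨ c i = -1 := by
    have := congrArg norm (hpc i)
    rw [U.norm_map, PiLp.norm_single, PiLp.norm_single, norm_one, Real.norm_eq_abs] at this
    exact (abs_eq zero_le_one).1 this.symm
  have hsymm (i : ι) :
      U.symm (EuclideanSpace.single (p i) 1) = c i • EuclideanSpace.single i 1 := by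
    rw [LinearIsometryEquiv.symm_apply_eq, map_smul, hpc]
    ext j
    rcases hc i with h | h <;> by_cases hj : j = p i <;> simp [h, hj]
  have hp : Function.Injective p := by
    intro i j hij
    by_contra hne
    have := congrArg (· i) ((hsymm i).symm.trans (hij ▸ hsymm j))
    rcases hc i with h | h <;> simp [h, hne] at this
  let σ := Equiv.ofBijective p hp.bijective_of_finite
  refine ⟨σ.symm, c ∘ σ.symm, fun i => hc _, fun x a => ?_⟩
  have hσ : p (σ.symm a) = a := σ.apply_symm_apply a
  rw [apply_eq_inner_symm_single, ← hσ, hsymm, real_inner_smul_left,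
    EuclideanSpace.inner_single_left, hσ]
  simp

end PolygonalSphere

open PolygonalSphere

/-- For `2 ≤ d ≤ N-1`, the linear isometries of `ℝ^N` preserving the polygonal
sphere `S^{N-1,d-1}_ℝ` (unit vectors with at most `d` nonzero coordinates) are
exactly the signed permutation matrices, i.e. the hyperoctahedral group `H_N`. -/
theorem isometry_group_of_polygonal_sphere (N d : ℕ) (h2 : 2 ≤ d) (hdN : d + 1 ≤ N)
    (U : EuclideanSpace ℝ (Fin N) ≃ₗᵢ[ℝ] EuclideanSpace ℝ (Fin N)) :
    (⇑U '' {x : EuclideanSpace ℝ (Fin N) | (∑ i, x i ^ 2) = 1 ∧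
        ∀ f : Fin (d + 1) → Fin N, Function.Injective f → (∏ r, x (f r)) = 0} =
      {x : EuclideanSpace ℝ (Fin N) | (∑ i, x i ^ 2) = 1 ∧
        ∀ f : Fin (d + 1) → Fin N, Function.Injective f → (∏ r, x (f r)) = 0}) ↔
    ∃ (π : Equiv.Perm (Fin N)) (ε : Fin N → ℝ),
      (∀ i, ε i = 1 ∨ ε i = -1) ∧
      ∀ (x : EuclideanSpace ℝ (Fin N)) (i : Fin N), U x i = ε i * x (π i) := by
  rw [setOf_eq_polygonalSphere]
  constructor
  · intro hU
    have hcone := card_supp_map_le_of_mapsTo U.toLinearMap (hU ▸ Set.mapsTo_image U _)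
    exact exists_signedPerm_of_map_single_eq_single U
      (exists_map_single_eq_single (by omega) (by simpa using hdN) U hcone)
  · rintro ⟨π, ε, hε, hU⟩
    exact image_polygonalSphere_of_signedPerm U hε hU
end

section
/- Let N ≥ 3 and let U ∈ O(N) satisfy U_{i a} U_{j b} U_{k c} = 0 whenever, with r the number of distinct row indices among i, j, k and s the number of distinct column indices among a, b, c, either r ≤ 2 and s = 3, or r = 3 and s ≤ 2. Then U is a signed permutation matrix. -/
/-- `O_N ∩ Ō_N^* = H_N` for `N ≥ 3`: an orthogonal matrix `U` with
`U_{ia}U_{jb}U_{kc} = 0` whenever the numbers `r`, `s` of distinct rows and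
columns spanned satisfy `(r ≤ 2, s = 3)` or `(r = 3, s ≤ 2)` is a signed
permutation matrix. -/
theorem orthogonal_inter_twisted_half_eq_hyperoctahedral (N : ℕ) (hN : 3 ≤ N)
    (U : Matrix (Fin N) (Fin N) ℝ) (hU : U.transpose * U = 1)
    (hrel : ∀ i j k a b c : Fin N,
      ((({i, j, k} : Finset (Fin N)).card ≤ 2 ∧ ({a, b, c} : Finset (Fin N)).card = 3) ∨
        (({i, j, k} : Finset (Fin N)).card = 3 ∧ ({a, b, c} : Finset (Fin N)).card ≤ 2)) →
      U i a * U j b * U k c = 0) :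
    ∃ (π : Equiv.Perm (Fin N)) (ε : Fin N → ℝ),
      (∀ i, ε i = 1 ∨ ε i = -1) ∧
      ∀ i j, U i j = if j = π i then ε i else 0 := by
  classical
  have hU' : U * U.transpose = 1 := mul_eq_one_comm.mp hU
  -- columns have norm 1
  have hcol : ∀ c : Fin N, ∑ k, U k c * U k c = 1 := by
    intro c
    have := congrFun (congrFun hU c) c
    simpa [Matrix.mul_apply, Matrix.one_apply, Matrix.transpose_apply] using this
  -- rows have norm 1
  have hrow : ∀ i : Fin N, ∑ a, U i a * U i a = 1 := by
    intro i
    have := congrFun (congrFun hU' i) i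
    simpa [Matrix.mul_apply, Matrix.one_apply, Matrix.transpose_apply] using this
  -- rows are orthogonal
  have hroworth : ∀ i j : Fin N, i ≠ j → ∑ a, U i a * U j a = 0 := by
    intro i j hij
    have := congrFun (congrFun hU' i) j
    simpa [Matrix.mul_apply, Matrix.one_apply, Matrix.transpose_apply, hij] using this
  -- each row has at most one nonzero entry
  have hrowzero : ∀ i a b : Fin N, a ≠ b → U i a ≠ 0 → U i b = 0 := by
    intro i a b hab ha
    by_contra hb
    -- pick a third column c
    have hcard2 : ({a, b} : Finset (Fin N)).card < Fintype.card (Fin N) := by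
      have h1 : ({a, b} : Finset (Fin N)).card ≤ 2 :=
        (Finset.card_insert_le _ _).trans (by simp)
      have h2 : 3 ≤ Fintype.card (Fin N) := by simpa using hN
      omega
    have hpos : 0 < ({a, b} : Finset (Fin N))ᶜ.card := by
      rw [Finset.card_compl]; omega
    obtain ⟨c, hc⟩ := Finset.card_pos.mp hpos
    simp only [Finset.mem_compl, Finset.mem_insert, Finset.mem_singleton, not_or] at hc
    obtain ⟨hca, hcb⟩ := hc
    -- column c vanishes
    have hcolc : ∀ k, U k c = 0 := by
      intro k
      have h3 : ({a, b, c} : Finset (Fin N)).card = 3 := by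
        rw [Finset.card_eq_three]
        exact ⟨a, b, c, hab, Ne.symm hca, Ne.symm hcb, rfl⟩
      have h2 : ({i, i, k} : Finset (Fin N)).card ≤ 2 := by
        rw [Finset.insert_idem]
        exact (Finset.card_insert_le _ _).trans (by simp)
      have := hrel i i k a b c (Or.inl ⟨h2, h3⟩)
      have hiab : U i a * U i b ≠ 0 := mul_ne_zero ha hb
      exact (mul_eq_zero.mp this).resolve_left hiab
    have := hcol c
    rw [Finset.sum_eq_zero (fun k _ => by rw [hcolc k, mul_zero])] at this
    exact zero_ne_one this
  -- each row has a nonzero entry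
  have hex : ∀ i : Fin N, ∃ a, U i a ≠ 0 := by
    intro i
    by_contra h
    push_neg at h
    have := hrow i
    rw [Finset.sum_eq_zero (fun a _ => by rw [h a, mul_zero])] at this
    exact zero_ne_one this
  choose f hf using hex
  -- f is injective
  have hinj : Function.Injective f := by
    intro i j hij
    by_contra hne
    have := hroworth i j hne
    rw [Finset.sum_eq_single (f i)
      (fun a _ ha => by rw [hrowzero i (f i) a (Ne.symm ha) (hf i), zero_mul])
      (by simp)] at this
    rw [hij] at this
    exact hf j (mul_eq_zero.mp ((hij ▸ this : U i (f j) * U j (f j) = 0)) |>.elim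
      (fun h => absurd (hij ▸ h) (hf i)) id)
  have hbij : Function.Bijective f := (Finite.injective_iff_bijective).mp hinj
  refine ⟨Equiv.ofBijective f hbij, fun i => U i (f i), fun i => ?_, fun i j => ?_⟩
  · -- diagonal entry is ±1
    have := hrow i
    rw [Finset.sum_eq_single (f i)
      (fun a _ ha => by rw [hrowzero i (f i) a (Ne.symm ha) (hf i), zero_mul])
      (by simp)] at this
    exact mul_self_eq_one_iff.mp this
  · by_cases h : j = f i
    · simp [h, Equiv.ofBijective]
    · rw [if_neg (by simpa [Equiv.ofBijective] using h)]
      exact hrowzero i (f i) j (fun hh => h hh.symm) (hf i)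
end

section
/- In a unital ring, suppose elements (u_{ij})_{1≤i,j≤N} with N ≥ 3 satisfy: (a) u_{ia}u_{jb}u_{ka} = 0 for all i,j,k distinct and all a,b; (b) u_{ia}²u_{kb} = u_{kb}u_{ia}² for all i,k,a,b; (c) Σ_k u_{ka}² = 1 for each a (column sums of squares) and Σ_b u_{jb}² = 1 for each j (row sums of squares). Then u_{ia}(1 − u_{ia}² − u_{ja}²) = 0 for all i ≠ j, and consequently u_{ia}³ = u_{ia} for all i, a. -/
/-- Algebraic core of `G⁺(S^{N-1,1}_{ℝ,*}) = H_N^{[∞]}`: in a unital ring, if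
`u_{ia}u_{jb}u_{ka} = 0` for distinct `i,j,k`, squares of entries commute with
all entries, and rows and columns of squares sum to `1`, then
`u_{ia}(1 - u_{ia}² - u_{ja}²) = 0` for `i ≠ j` and `u_{ia}³ = u_{ia}`. -/
theorem partial_isometry_relations {R : Type*} [Ring R] (N : ℕ) (hN : 3 ≤ N)
    (u : Fin N → Fin N → R)
    (ha : ∀ i j k a b : Fin N, i ≠ j → j ≠ k → i ≠ k → u i a * u j b * u k a = 0)
    (hb : ∀ i k a b : Fin N, u i a ^ 2 * u k b = u k b * u i a ^ 2)
    (hcol : ∀ a, ∑ k, u k a ^ 2 = 1)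
    (hrow : ∀ j, ∑ b, u j b ^ 2 = 1) :
    (∀ i j a : Fin N, i ≠ j → u i a * (1 - u i a ^ 2 - u j a ^ 2) = 0) ∧
    (∀ i a : Fin N, u i a ^ 3 = u i a) := by
  have key : ∀ i j a : Fin N, i ≠ j → u i a * (1 - u i a ^ 2 - u j a ^ 2) = 0 := by
    intro i j a hij
    -- Step 1+2: for every b, (u i a * (1 - u ia² - u ja²)) * u j b = 0
    have step : ∀ b, (u i a * (1 - u i a ^ 2 - u j a ^ 2)) * u j b = 0 := by
      intro b
      have h1 : ∑ k, u i a * u j b * u k a ^ 2 = u i a * u j b := by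
        rw [← Finset.mul_sum, hcol, mul_one]
      have h2 : ∑ k, u i a * u j b * u k a ^ 2
          = u i a * u j b * u i a ^ 2 + u i a * u j b * u j a ^ 2 := by
        rw [← Finset.sum_subset (Finset.subset_univ ({i, j} : Finset (Fin N)))]
        · rw [Finset.sum_pair hij]
        · intro k _ hk
          simp only [Finset.mem_insert, Finset.mem_singleton, not_or] at hk
          have hz := ha i j k a b hij (fun h => hk.2 h.symm) (fun h => hk.1 h.symm)
          calc u i a * u j b * u k a ^ 2 = (u i a * u j b * u k a) * u k a := by noncomm_ring
            _ = 0 := by rw [hz, zero_mul]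
      have h3 : u i a * u j b * u i a ^ 2 = u i a ^ 3 * u j b := by
        calc u i a * u j b * u i a ^ 2 = u i a * (u j b * u i a ^ 2) := by rw [mul_assoc]
          _ = u i a * (u i a ^ 2 * u j b) := by rw [← hb i j a b]
          _ = u i a ^ 3 * u j b := by noncomm_ring
      have h4 : u i a * u j b * u j a ^ 2 = u i a * u j a ^ 2 * u j b := by
        calc u i a * u j b * u j a ^ 2 = u i a * (u j b * u j a ^ 2) := by rw [mul_assoc]
          _ = u i a * (u j a ^ 2 * u j b) := by rw [← hb j j a b]
          _ = u i a * u j a ^ 2 * u j b := by rw [mul_assoc]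
      have h5 : u i a * u j b = u i a ^ 3 * u j b + u i a * u j a ^ 2 * u j b := by
        rw [← h3, ← h4, ← h2, h1]
      calc (u i a * (1 - u i a ^ 2 - u j a ^ 2)) * u j b
          = u i a * u j b - (u i a ^ 3 * u j b + u i a * u j a ^ 2 * u j b) := by noncomm_ring
        _ = 0 := by rw [← h5]; noncomm_ring
    have main : (u i a * (1 - u i a ^ 2 - u j a ^ 2)) * (∑ b, u j b ^ 2) = 0 := by
      rw [Finset.mul_sum]
      apply Finset.sum_eq_zero
      intro b _
      calc (u i a * (1 - u i a ^ 2 - u j a ^ 2)) * u j b ^ 2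
          = ((u i a * (1 - u i a ^ 2 - u j a ^ 2)) * u j b) * u j b := by noncomm_ring
        _ = 0 := by rw [step b, zero_mul]
    rw [hrow, mul_one] at main
    exact main
  refine ⟨key, ?_⟩
  intro i a
  obtain ⟨j, k, hij, hjk, hik⟩ : ∃ j k : Fin N, i ≠ j ∧ j ≠ k ∧ i ≠ k := by
    by_cases h0 : i.val = 0
    · refine ⟨⟨1, by omega⟩, ⟨2, by omega⟩, ?_, ?_, ?_⟩ <;>
        (simp only [ne_eq, Fin.ext_iff]; omega)
    · by_cases h1 : i.val = 1
      · refine ⟨⟨0, by omega⟩, ⟨2, by omega⟩, ?_, ?_, ?_⟩ <;>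
          (simp only [ne_eq, Fin.ext_iff]; omega)
      · refine ⟨⟨0, by omega⟩, ⟨1, by omega⟩, ?_, ?_, ?_⟩ <;>
          (simp only [ne_eq, Fin.ext_iff]; omega)
  -- abbreviations: t = u i a, x = t - t^3
  have h1 : u i a * u j a ^ 2 = u i a - u i a ^ 3 := by
    calc u i a * u j a ^ 2
        = u i a - u i a ^ 3 - u i a * (1 - u i a ^ 2 - u j a ^ 2) := by noncomm_ring
      _ = u i a - u i a ^ 3 := by rw [key i j a hij]; noncomm_ring
  have h2 : u i a * u k a ^ 2 = u i a - u i a ^ 3 := by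
    calc u i a * u k a ^ 2
        = u i a - u i a ^ 3 - u i a * (1 - u i a ^ 2 - u k a ^ 2) := by noncomm_ring
      _ = u i a - u i a ^ 3 := by rw [key i k a hik]; noncomm_ring
  have hjik : u j a * u i a * u k a = 0 := ha j i k a a hij.symm hik hjk
  -- x * x = 0
  have hB : (u i a - u i a ^ 3) * (u i a - u i a ^ 3) = 0 := by
    calc (u i a - u i a ^ 3) * (u i a - u i a ^ 3)
        = (u i a * u j a ^ 2) * (u i a * u k a ^ 2) := by rw [h1, h2]
      _ = u i a * u j a * (u j a * u i a * u k a) * u k a := by noncomm_ring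
      _ = 0 := by rw [hjik]; noncomm_ring
  -- u j a ^ 2 = u j a ^ 4 + u j a ^ 2 * u k a ^ 2
  have e : u j a * u k a ^ 2 * u j a = u j a ^ 2 * u k a ^ 2 := by
    calc u j a * u k a ^ 2 * u j a = u j a * (u k a ^ 2 * u j a) := by rw [mul_assoc]
      _ = u j a * (u j a * u k a ^ 2) := by rw [hb k j a a]
      _ = u j a ^ 2 * u k a ^ 2 := by noncomm_ring
  have h4 : u j a * (1 - u j a ^ 2 - u k a ^ 2) * u j a = 0 := by
    rw [key j k a hjk, zero_mul]
  have hsq : u j a ^ 2 = u j a ^ 4 + u j a ^ 2 * u k a ^ 2 := by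
    calc u j a ^ 2
        = u j a * (1 - u j a ^ 2 - u k a ^ 2) * u j a + u j a ^ 4
            + u j a * u k a ^ 2 * u j a := by noncomm_ring
      _ = u j a ^ 4 + u j a ^ 2 * u k a ^ 2 := by rw [h4, e]; noncomm_ring
  -- x = (x - t²x) + (x - t²x)
  have hA0 : u i a - u i a ^ 3
      = ((u i a - u i a ^ 3) - u i a ^ 2 * (u i a - u i a ^ 3))
        + ((u i a - u i a ^ 3) - u i a ^ 2 * (u i a - u i a ^ 3)) := by
    calc u i a - u i a ^ 3 = u i a * u j a ^ 2 := h1.symm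
      _ = u i a * (u j a ^ 4 + u j a ^ 2 * u k a ^ 2) := by conv_lhs => rw [hsq]
      _ = (u i a * u j a ^ 2) * u j a ^ 2 + (u i a * u j a ^ 2) * u k a ^ 2 := by noncomm_ring
      _ = (u i a - u i a ^ 3) * u j a ^ 2 + (u i a - u i a ^ 3) * u k a ^ 2 := by rw [h1]
      _ = (u i a * u j a ^ 2 - u i a ^ 2 * (u i a * u j a ^ 2))
          + (u i a * u k a ^ 2 - u i a ^ 2 * (u i a * u k a ^ 2)) := by noncomm_ring
      _ = ((u i a - u i a ^ 3) - u i a ^ 2 * (u i a - u i a ^ 3))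
          + ((u i a - u i a ^ 3) - u i a ^ 2 * (u i a - u i a ^ 3)) := by rw [h1, h2]
  -- 2 * (t² * x) = x
  have hA : 2 * (u i a ^ 2 * (u i a - u i a ^ 3)) = u i a - u i a ^ 3 := by
    calc 2 * (u i a ^ 2 * (u i a - u i a ^ 3))
        = 2 * (u i a - u i a ^ 3)
          - (((u i a - u i a ^ 3) - u i a ^ 2 * (u i a - u i a ^ 3))
            + ((u i a - u i a ^ 3) - u i a ^ 2 * (u i a - u i a ^ 3))) := by noncomm_ring
      _ = 2 * (u i a - u i a ^ 3) - (u i a - u i a ^ 3) := by rw [← hA0]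
      _ = u i a - u i a ^ 3 := by noncomm_ring
  -- t² * (t² * x) = t² * x  (using x * x = 0)
  have hD : u i a ^ 2 * (u i a ^ 2 * (u i a - u i a ^ 3))
      = u i a ^ 2 * (u i a - u i a ^ 3) := by
    calc u i a ^ 2 * (u i a ^ 2 * (u i a - u i a ^ 3))
        = u i a ^ 2 * (u i a - u i a ^ 3)
          - u i a * ((u i a - u i a ^ 3) * (u i a - u i a ^ 3)) := by noncomm_ring
      _ = u i a ^ 2 * (u i a - u i a ^ 3) := by rw [hB]; noncomm_ring
  -- t² * x = 0
  have hEq : u i a ^ 2 * (u i a - u i a ^ 3)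
      = 2 * (u i a ^ 2 * (u i a - u i a ^ 3)) := by
    calc u i a ^ 2 * (u i a - u i a ^ 3)
        = u i a ^ 2 * (2 * (u i a ^ 2 * (u i a - u i a ^ 3))) := by
          conv_lhs => rw [← hA]
      _ = 2 * (u i a ^ 2 * (u i a ^ 2 * (u i a - u i a ^ 3))) := by noncomm_ring
      _ = 2 * (u i a ^ 2 * (u i a - u i a ^ 3)) := by rw [hD]
  have hE : u i a ^ 2 * (u i a - u i a ^ 3) = 0 := by
    have hneg : -(u i a ^ 2 * (u i a - u i a ^ 3)) = 0 := by
      calc -(u i a ^ 2 * (u i a - u i a ^ 3))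
          = u i a ^ 2 * (u i a - u i a ^ 3)
            - 2 * (u i a ^ 2 * (u i a - u i a ^ 3)) := by noncomm_ring
        _ = u i a ^ 2 * (u i a - u i a ^ 3)
            - u i a ^ 2 * (u i a - u i a ^ 3) := by rw [← hEq]
        _ = 0 := by noncomm_ring
    exact neg_eq_zero.mp hneg
  have hx0 : u i a - u i a ^ 3 = 0 := by rw [← hA, hE, mul_zero]
  exact (sub_eq_zero.mp hx0).symm
end
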